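/- arXiv:1909.13771 — 2 statements merged into one kernel-verified Lean document; each statement's English description precedes it below -/
import Mathlib

section
/- Let G be a finite connected graph with v(G) vertices, and let p ∈ [0,1] satisfy (f_{1,G}(p))² ≥ 4·(1−p)^{v(G)}. Then the long paths critical probability satisfies p_{1,ℓp}(ℤ × G) ≤ p. -/
open MeasureTheory ProbabilityTheory

namespace OneIndep

variable {V : Type*}

/-- The configuration space of a bond percolation model on `G`: each edge of `G` is
either open (`true`) or closed (`false`). A configuration is identified with the
spanning subgraph consisting of its open edges. -/
abbrev Config (G : SimpleGraph V) : Type _ := G.edgeSet → Bool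

/-- The set of endpoints of edges belonging to an edge set `F`. -/
def endpointsOf (F : Set (Sym2 V)) : Set V := {v | ∃ e ∈ F, v ∈ e}

/-- Two edge sets are `k`-distant in `G` if they are disjoint and every walk in `G` from an
endpoint of an edge of `F₁` to an endpoint of an edge of `F₂` has length at least `k`.
For `k = 1` this says precisely that `F₁` and `F₂` are disjoint and no edge of `F₁` shares
an endpoint with an edge of `F₂`. -/
def KDistant (G : SimpleGraph V) (k : ℕ) (F₁ F₂ : Set (Sym2 V)) : Prop :=
  Disjoint F₁ F₂ ∧
    ∀ u ∈ endpointsOf F₁, ∀ v ∈ endpointsOf F₂, ∀ w : G.Walk u v, k ≤ w.length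

/-- The sub-σ-algebra of the configuration space generated by the states of the edges
belonging to `F`. -/
def cylinderSigma (G : SimpleGraph V) (F : Set (Sym2 V)) : MeasurableSpace (Config G) :=
  MeasurableSpace.comap (fun ω (e : {e : G.edgeSet // (e : Sym2 V) ∈ F}) => ω e) inferInstance

/-- A measure on the configuration space of `G` is `k`-independent if the states of any two
`k`-distant edge sets are independent. -/
def KIndepMeasure (G : SimpleGraph V) (k : ℕ) (μ : Measure (Config G)) : Prop :=
  ∀ F₁ F₂ : Set (Sym2 V), F₁ ⊆ G.edgeSet → F₂ ⊆ G.edgeSet → KDistant G k F₁ F₂ →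
    Indep (cylinderSigma G F₁) (cylinderSigma G F₂) μ

/-- `MGe G k p` is the collection of `k`-independent bond percolation measures on `G` in which
every edge is open with probability at least `p`. -/
def MGe (G : SimpleGraph V) (k : ℕ) (p : ℝ) : Set (Measure (Config G)) :=
  {μ | IsProbabilityMeasure μ ∧ KIndepMeasure G k μ ∧
    ∀ e : G.edgeSet, ENNReal.ofReal p ≤ μ {ω | ω e = true}}

/-- `MLe G k p` is the collection of `k`-independent bond percolation measures on `G` in which
every edge is open with probability at most `p`. -/
def MLe (G : SimpleGraph V) (k : ℕ) (p : ℝ) : Set (Measure (Config G)) :=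
  {μ | IsProbabilityMeasure μ ∧ KIndepMeasure G k μ ∧
    ∀ e : G.edgeSet, μ {ω | ω e = true} ≤ ENNReal.ofReal p}

/-- The spanning subgraph of `G` consisting of the open edges of the configuration `ω`. -/
def openSubgraph (G : SimpleGraph V) (ω : Config G) : SimpleGraph V :=
  SimpleGraph.fromEdgeSet {e | ∃ h : e ∈ G.edgeSet, ω ⟨e, h⟩ = true}

/-- Percolation: the open subgraph contains an infinite connected component. -/
def Percolates (G : SimpleGraph V) (ω : Config G) : Prop :=
  ∃ v : V, {w | (openSubgraph G ω).Reachable v w}.Infinite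

/-- The Harris critical probability for 1-independent percolation on `G`. -/
noncomputable def harrisCrit (G : SimpleGraph V) : ℝ :=
  sInf {p | p ∈ Set.Icc (0:ℝ) 1 ∧ ∀ μ ∈ MGe G 1 p, μ {ω | Percolates G ω} = 1}

/-- The open subgraph contains a path of length `n`. -/
def HasOpenPathOfLength (G : SimpleGraph V) (ω : Config G) (n : ℕ) : Prop :=
  ∃ (u v : V) (w : (openSubgraph G ω).Walk u v), w.IsPath ∧ w.length = n

/-- The long paths critical probability for 1-independent percolation on `G`. -/
noncomputable def longPathsCrit (G : SimpleGraph V) : ℝ :=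
  sInf {p | p ∈ Set.Icc (0:ℝ) 1 ∧
    ∀ μ ∈ MGe G 1 p, ∀ n : ℕ, 0 < μ {ω | HasOpenPathOfLength G ω n}}

/-- The `k`-independent connectivity function `f_{k,G}(p)`: the infimum over all
`k`-independent measures with edge-probability at least `p` of the probability that the
random spanning subgraph is connected. -/
noncomputable def connFun (G : SimpleGraph V) (k : ℕ) (p : ℝ) : ℝ :=
  sInf {x | ∃ μ ∈ MGe G k p, x = (μ {ω | (openSubgraph G ω).Connected}).toReal}

/-- The maximal `k`-independent connectivity function `F_{k,G}(p)`: the supremum over all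
`k`-independent measures with edge-probability at most `p` of the probability that the
random spanning subgraph is connected. -/
noncomputable def connFunMax (G : SimpleGraph V) (k : ℕ) (p : ℝ) : ℝ :=
  sSup {x | ∃ μ ∈ MLe G k p, x = (μ {ω | (openSubgraph G ω).Connected}).toReal}

/-- The line lattice `ℤ`: the two-way infinite path. -/
def lineLattice : SimpleGraph ℤ := SimpleGraph.fromRel (fun x y => y = x + 1)

/-- The hypercubic lattice `ℤ^d`. -/
def hypercubicLattice (d : ℕ) : SimpleGraph (Fin d → ℤ) :=
  SimpleGraph.fromRel (fun x y => ∑ i, (x i - y i).natAbs = 1)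

/-- The square lattice `ℤ²`. -/
def squareLattice : SimpleGraph (ℤ × ℤ) :=
  SimpleGraph.fromRel (fun x y => (x.1 - y.1).natAbs + (x.2 - y.2).natAbs = 1)

/-!
Fix `μ ∈ MGe (ℤ □ G) 1 p` and write `f = f_{1,G}(p)`. Let `B m` be the event that each of the
columns `{0, …, m} × G` is connected by open edges and that consecutive columns are joined by an
open cross edge; on `B m` there is an open path of length `m`. Restricted to one column, `μ` is a
1-independent measure on `G`, so a column is connected with probability at least `f`; the `|V|`
cross edges between two columns form a matching, so they are all closed with probability at most
`(1 - p) ^ |V| ≤ f² / 4`. Events living on column slabs at distance one are independent, which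
gives `P(B (m+1)) ≥ f P(B m) - (f² / 4) P(B (m-1))`, and this recursion forces
`P(B (m+1)) ≥ (f / 2) P(B m) > 0`.
-/

open SimpleGraph

section Independence

variable {W : Type*} {H : SimpleGraph W}

lemma kDistant_one_iff {F₁ F₂ : Set (Sym2 W)} :
    KDistant H 1 F₁ F₂ ↔ Disjoint (endpointsOf F₁) (endpointsOf F₂) := by
  refine ⟨fun hd => Set.disjoint_left.mpr fun x hx₁ hx₂ => ?_,
    fun hd => ⟨Set.disjoint_left.mpr fun e he₁ he₂ => ?_, fun u hu v hv w => ?_⟩⟩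
  · simpa using hd.2 x hx₁ x hx₂ .nil
  · induction e using Sym2.ind with
    | _ a b =>
      have ha := Sym2.mem_mk_left a b
      exact hd.ne_of_mem ⟨_, he₁, ha⟩ ⟨_, he₂, ha⟩ rfl
  · exact Nat.one_le_iff_ne_zero.mpr fun h => hd.ne_of_mem hu hv (Walk.eq_of_length_eq_zero h)

lemma cylinderSigma_le_pi (F : Set (Sym2 W)) : cylinderSigma H F ≤ MeasurableSpace.pi :=
  (measurable_pi_lambda _ fun _ => measurable_pi_apply _).comap_le

lemma measurable_apply_cylinderSigma {F : Set (Sym2 W)} {e : H.edgeSet}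
    (he : (e : Sym2 W) ∈ F) :
    Measurable[cylinderSigma H F] fun ω : Config H => ω e :=
  fun _ hs => ⟨_, measurable_pi_apply (⟨e, he⟩ : {e : H.edgeSet // ↑e ∈ F}) hs, rfl⟩

lemma cylinderSigma_mono {F F' : Set (Sym2 W)} (h : F ⊆ F') :
    cylinderSigma H F ≤ cylinderSigma H F' :=
  measurable_iff_comap_le.mp <| @measurable_pi_lambda _ _ _ (cylinderSigma H F') _ _
    fun e => measurable_apply_cylinderSigma (h e.2)

lemma KIndepMeasure.measure_inter {μ : Measure (Config H)} (hμ : KIndepMeasure H 1 μ)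
    {F₁ F₂ : Set (Sym2 W)} (h₁ : F₁ ⊆ H.edgeSet) (h₂ : F₂ ⊆ H.edgeSet)
    (hd : Disjoint (endpointsOf F₁) (endpointsOf F₂)) {s t : Set (Config H)}
    (hs : MeasurableSet[cylinderSigma H F₁] s) (ht : MeasurableSet[cylinderSigma H F₂] t) :
    μ (s ∩ t) = μ s * μ t :=
  (Indep_iff _ _ _).mp (hμ F₁ F₂ h₁ h₂ (kDistant_one_iff.mpr hd)) s t hs ht

lemma KIndepMeasure.measureReal_inter {μ : Measure (Config H)} (hμ : KIndepMeasure H 1 μ)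
    {F₁ F₂ : Set (Sym2 W)} (h₁ : F₁ ⊆ H.edgeSet) (h₂ : F₂ ⊆ H.edgeSet)
    (hd : Disjoint (endpointsOf F₁) (endpointsOf F₂)) {s t : Set (Config H)}
    (hs : MeasurableSet[cylinderSigma H F₁] s) (ht : MeasurableSet[cylinderSigma H F₂] t) :
    μ.real (s ∩ t) = μ.real s * μ.real t := by
  simp only [Measure.real, hμ.measure_inter h₁ h₂ hd hs ht, ENNReal.toReal_mul]

lemma measurableSet_edgeOpen (e : H.edgeSet) : MeasurableSet {ω : Config H | ω e = true} :=
  measurableSet_eq_fun (measurable_pi_apply e) measurable_const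

lemma kIndepMeasure_dirac (k : ℕ) (ω₀ : Config H) :
    KIndepMeasure H k (Measure.dirac ω₀) := by
  intro F₁ F₂ _ _ _
  refine (Indep_iff _ _ _).mpr fun s t hs ht => ?_
  have hs' := cylinderSigma_le_pi F₁ s hs
  have ht' := cylinderSigma_le_pi F₂ t ht
  rw [Measure.dirac_apply' _ hs', Measure.dirac_apply' _ ht',
    Measure.dirac_apply' _ (hs'.inter ht')]
  by_cases h₁ : ω₀ ∈ s <;> by_cases h₂ : ω₀ ∈ t <;> simp [h₁, h₂]

end Independence

section Pullback

variable {W : Type*} {G : SimpleGraph V} {H : SimpleGraph W} (f : G →g H)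

lemma endpointsOf_image_sym2Map (g : V → W) (F : Set (Sym2 V)) :
    endpointsOf (Sym2.map g '' F) = g '' endpointsOf F := by
  ext x
  constructor
  · rintro ⟨_, ⟨e, he, rfl⟩, hx⟩
    obtain ⟨y, hy, rfl⟩ := Sym2.mem_map.mp hx
    exact ⟨y, ⟨e, he, hy⟩, rfl⟩
  · rintro ⟨y, ⟨e, he, hy⟩, rfl⟩
    exact ⟨_, ⟨e, he, rfl⟩, Sym2.mem_map.mpr ⟨y, hy, rfl⟩⟩

lemma measurable_comp_mapEdgeSet : Measurable fun ω : Config H => ω ∘ f.mapEdgeSet :=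
  measurable_pi_lambda _ fun _ => measurable_pi_apply _

lemma measurable_comp_mapEdgeSet_cylinderSigma (F : Set (Sym2 V)) :
    Measurable[cylinderSigma H (Sym2.map f '' F), cylinderSigma G F]
      fun ω : Config H => ω ∘ f.mapEdgeSet :=
  measurable_comap_iff.mpr <| @measurable_pi_lambda _ _ _
    (cylinderSigma H (Sym2.map f '' F)) _ _ fun e =>
    measurable_apply_cylinderSigma (Set.mem_image_of_mem _ e.2)

lemma cylinderSigma_edgeSet : cylinderSigma G G.edgeSet = MeasurableSpace.pi := by
  refine le_antisymm (cylinderSigma_le_pi _) ?_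
  simpa using measurable_iff_comap_le.mp <| @measurable_pi_lambda _ _ _
    (cylinderSigma G G.edgeSet) _ id fun e => measurable_apply_cylinderSigma e.2

theorem map_comp_mapEdgeSet_mem_MGe (hf : Function.Injective f) {p : ℝ}
    {μ : Measure (Config H)} (hμ : μ ∈ MGe H 1 p) :
    μ.map (fun ω => ω ∘ f.mapEdgeSet) ∈ MGe G 1 p := by
  obtain ⟨hprob, hind, hedge⟩ := hμ
  have hmeas := measurable_comp_mapEdgeSet f
  have himage {F : Set (Sym2 V)} (hF : F ⊆ G.edgeSet) : Sym2.map f '' F ⊆ H.edgeSet := by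
    rintro _ ⟨e, he, rfl⟩
    exact f.map_mem_edgeSet (hF he)
  refine ⟨Measure.isProbabilityMeasure_map hmeas.aemeasurable,
    fun F₁ F₂ h₁ h₂ hd => (Indep_iff _ _ _).mpr fun s t hs ht => ?_, fun e => ?_⟩
  · have hs' := cylinderSigma_le_pi _ s hs
    have ht' := cylinderSigma_le_pi _ t ht
    rw [Measure.map_apply hmeas hs', Measure.map_apply hmeas ht',
      Measure.map_apply hmeas (hs'.inter ht'),
      Set.preimage_inter]
    refine hind.measure_inter (himage h₁) (himage h₂) ?_
      (measurable_comp_mapEdgeSet_cylinderSigma f F₁ hs)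
      (measurable_comp_mapEdgeSet_cylinderSigma f F₂ ht)
    rw [endpointsOf_image_sym2Map, endpointsOf_image_sym2Map]
    exact (Set.disjoint_image_iff hf).mpr (kDistant_one_iff.mp hd)
  · rw [Measure.map_apply hmeas (measurableSet_edgeOpen e)]
    exact hedge (f.mapEdgeSet e)

lemma reachable_openSubgraph_map {ω : Config H} {u v : V}
    (h : (openSubgraph G (ω ∘ f.mapEdgeSet)).Reachable u v) :
    (openSubgraph H ω).Reachable (f u) (f v) :=
  h.map ⟨f, fun {_ _} hab => by
    obtain ⟨⟨hab, hopen⟩, -⟩ := (fromEdgeSet_adj _).mp hab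
    exact (fromEdgeSet_adj _).mpr ⟨⟨f.map_mem_edgeSet hab, hopen⟩, (f.map_adj hab).ne⟩⟩

end Pullback

section ConnFun

variable {G : SimpleGraph V}

lemma connFun_le {k : ℕ} {p : ℝ} {μ : Measure (Config G)} (hμ : μ ∈ MGe G k p) :
    connFun G k p ≤ μ.real {ω | (openSubgraph G ω).Connected} :=
  csInf_le ⟨0, by rintro x ⟨ν, -, rfl⟩; exact ENNReal.toReal_nonneg⟩ ⟨μ, hμ, rfl⟩

lemma openSubgraph_le (ω : Config G) : openSubgraph G ω ≤ G :=
  fun _ _ hab => ((fromEdgeSet_adj _).mp hab).1.1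

lemma le_openSubgraph {ω : Config G} (hω : ∀ e, ω e = true) : G ≤ openSubgraph G ω :=
  fun _ _ hab => (fromEdgeSet_adj _).mpr ⟨⟨hab, hω ⟨_, hab⟩⟩, hab.ne⟩

lemma measure_connected_eq_one [Finite V] (hconn : G.Connected) {k : ℕ}
    {μ : Measure (Config G)} (hμ : μ ∈ MGe G k 1) :
    μ {ω | (openSubgraph G ω).Connected} = 1 := by
  obtain ⟨hprob, -, hedge⟩ := hμ
  have hopen : ∀ᵐ ω ∂μ, ∀ e, ω e = true := ae_all_iff.mpr fun e =>
    (ae_iff_measure_eq (measurableSet_edgeOpen e).nullMeasurableSet).mpr <|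
      le_antisymm (measure_mono (Set.subset_univ _)) (by simpa using hedge e)
  rw [← measure_univ (μ := μ),
    ← ae_iff_measure_eq (Set.toFinite _).measurableSet.nullMeasurableSet]
  exact hopen.mono fun ω hω => hconn.mono (le_openSubgraph hω)

lemma dirac_mem_MGe (k : ℕ) {p : ℝ} (hp : p ≤ 1) :
    Measure.dirac (fun _ => true : Config G) ∈ MGe G k p :=
  ⟨inferInstance, kIndepMeasure_dirac k _, fun e => by
    rw [Measure.dirac_apply_of_mem (by rfl)]
    exact ENNReal.ofReal_le_one.mpr hp⟩

lemma connFun_one [Finite V] (hconn : G.Connected) (k : ℕ) : connFun G k 1 = 1 := by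
  have hvalues :
      {x | ∃ μ ∈ MGe G k 1, x = μ.real {ω | (openSubgraph G ω).Connected}} = {1} := by
    refine Set.eq_singleton_iff_unique_mem.mpr ⟨⟨_, dirac_mem_MGe k le_rfl, ?_⟩, ?_⟩
    · simp [Measure.real, measure_connected_eq_one hconn (dirac_mem_MGe k le_rfl)]
    · rintro _ ⟨μ, hμ, rfl⟩
      simp [Measure.real, measure_connected_eq_one hconn hμ]
  exact (congrArg sInf hvalues).trans (csInf_singleton 1)

end ConnFun

section Matching

variable {W ι : Type*} {H : SimpleGraph W}

lemma measure_edgeClosed_le {p : ℝ} {μ : Measure (Config H)} [IsProbabilityMeasure μ]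
    {e : H.edgeSet} (he : ENNReal.ofReal p ≤ μ {ω | ω e = true}) :
    μ {ω | ω e = false} ≤ ENNReal.ofReal (1 - p) := by
  have hcompl : {ω : Config H | ω e = false} = {ω | ω e = true}ᶜ := by
    ext
    simp
  rw [hcompl, prob_compl_eq_one_sub (measurableSet_edgeOpen _), tsub_le_iff_right]
  calc 1 = ENNReal.ofReal (1 - p + p) := by simp
    _ ≤ ENNReal.ofReal (1 - p) + ENNReal.ofReal p := ENNReal.ofReal_add_le
    _ ≤ _ := add_le_add_right he _

theorem measure_forall_closed_le {p : ℝ} {μ : Measure (Config H)} (hμ : μ ∈ MGe H 1 p)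
    (e : ι → H.edgeSet)
    (hmatching : Pairwise fun i j => ∀ x ∈ (e i : Sym2 W), x ∉ (e j : Sym2 W)) (s : Finset ι) :
    μ {ω | ∀ i ∈ s, ω (e i) = false} ≤ ENNReal.ofReal (1 - p) ^ s.card := by
  classical
  obtain ⟨hprob, hind, hedge⟩ := hμ
  induction s using Finset.induction_on with
  | empty => simp
  | @insert a s ha ih =>
    have hdisj :
        Disjoint (endpointsOf {(e a : Sym2 W)}) (endpointsOf ((fun i => ↑(e i)) '' ↑s)) := by
      refine Set.disjoint_left.mpr ?_
      rintro x ⟨_, rfl, hxa⟩ ⟨_, ⟨i, hi, rfl⟩, hxi⟩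
      exact hmatching (by rintro rfl; exact ha hi) x hxa hxi
    have hsplit : {ω : Config H | ∀ i ∈ insert a s, ω (e i) = false} =
        {ω | ω (e a) = false} ∩ {ω | ∀ i ∈ s, ω (e i) = false} := by
      ext; simp
    have hsub : (fun i => (e i : Sym2 W)) '' ↑s ⊆ H.edgeSet := by
      rintro _ ⟨i, -, rfl⟩
      exact (e i).2
    rw [hsplit, hind.measure_inter (Set.singleton_subset_iff.mpr (e a).2) hsub hdisj
      (measurableSet_eq_fun (measurable_apply_cylinderSigma rfl) measurable_const) ?_,
      Finset.card_insert_of_notMem ha, pow_succ']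
    · exact mul_le_mul' (measure_edgeClosed_le (hedge _)) ih
    · simp only [Set.ofPred_forall]
      exact Finset.measurableSet_biInter s fun i hi =>
        measurableSet_eq_fun (measurable_apply_cylinderSigma ⟨i, hi, rfl⟩) measurable_const

end Matching

section Columns

variable (G : SimpleGraph V)

def slabEdges (a b : ℤ) : Set (Sym2 (ℤ × V)) :=
  {e | e ∈ (lineLattice □ G).edgeSet ∧ ∀ x ∈ e, x.1 ∈ Set.Icc a b}

lemma slabEdges_subset_edgeSet (a b : ℤ) : slabEdges G a b ⊆ (lineLattice □ G).edgeSet :=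
  fun _ he => he.1

lemma slabEdges_mono {a b c d : ℤ} (hca : c ≤ a) (hbd : b ≤ d) :
    slabEdges G a b ⊆ slabEdges G c d :=
  fun _ ⟨he, hx⟩ => ⟨he, fun x hxe => Set.Icc_subset_Icc hca hbd (hx x hxe)⟩

lemma disjoint_endpointsOf_slabEdges {a b c d : ℤ} (hbc : b < c) :
    Disjoint (endpointsOf (slabEdges G a b)) (endpointsOf (slabEdges G c d)) := by
  refine Set.disjoint_left.mpr ?_
  rintro x ⟨e, ⟨-, he⟩, hxe⟩ ⟨e', ⟨-, he'⟩, hxe'⟩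
  have := (he x hxe).2
  have := (he' x hxe').1
  omega

def crossEdge (i : ℤ) (v : V) : (lineLattice □ G).edgeSet :=
  ⟨s((i, v), (i + 1, v)),
    boxProd_adj_left.mpr <| (fromRel_adj _ _ _).mpr ⟨by omega, Or.inl rfl⟩⟩

def ColumnConnected (i : ℤ) : Set (Config (lineLattice □ G)) :=
  {ω | (openSubgraph G (ω ∘ (boxProdRight lineLattice G i).toHom.mapEdgeSet)).Connected}

def CrossOpen (i : ℤ) : Set (Config (lineLattice □ G)) :=
  {ω | ∃ v, ω (crossEdge G i v) = true}

def BlockConnected : ℕ → Set (Config (lineLattice □ G))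
  | 0 => ColumnConnected G 0
  | m + 1 => BlockConnected m ∩ CrossOpen G m ∩ ColumnConnected G (m + 1)

variable [Finite V]

lemma measurableSet_columnConnected (i : ℤ) :
    MeasurableSet[cylinderSigma _ (slabEdges G i i)] (ColumnConnected G i) := by
  have hconn :
      MeasurableSet[cylinderSigma G G.edgeSet] {ω | (openSubgraph G ω).Connected} := by
    rw [cylinderSigma_edgeSet]
    exact (Set.toFinite _).measurableSet
  refine cylinderSigma_mono ?_ _
    (measurable_comp_mapEdgeSet_cylinderSigma (boxProdRight lineLattice G i).toHom _ hconn)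
  rintro _ ⟨e, he, rfl⟩
  refine ⟨(boxProdRight lineLattice G i).toHom.map_mem_edgeSet he, fun x hx => ?_⟩
  obtain ⟨y, -, rfl⟩ := Sym2.mem_map.mp hx
  simp

lemma measurableSet_crossOpen (i : ℤ) :
    MeasurableSet[cylinderSigma _ (slabEdges G i (i + 1))] (CrossOpen G i) := by
  simp only [CrossOpen, Set.ofPred_exists]
  refine MeasurableSet.iUnion fun v => measurableSet_eq_fun
    (measurable_apply_cylinderSigma ⟨(crossEdge G i v).2, fun x hx => ?_⟩) measurable_const
  rcases Sym2.mem_iff.mp hx with rfl | rfl <;> simp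

lemma measurableSet_blockConnected (m : ℕ) :
    MeasurableSet[cylinderSigma _ (slabEdges G 0 m)] (BlockConnected G m) := by
  induction m with
  | zero => exact measurableSet_columnConnected G 0
  | succ m ih =>
    refine ((cylinderSigma_mono (slabEdges_mono G le_rfl (by omega)) _ ih).inter
      (cylinderSigma_mono (slabEdges_mono G (by omega) (by omega)) _
        (measurableSet_crossOpen G m))).inter
      (cylinderSigma_mono (slabEdges_mono G (by omega) (by omega)) _
        (measurableSet_columnConnected G (m + 1)))

end Columns

section Paths

variable {G : SimpleGraph V}

lemma natAbs_sub_le_length_lineLattice {a b : ℤ} (w : lineLattice.Walk a b) :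
    (b - a).natAbs ≤ w.length := by
  induction w with
  | nil => simp
  | cons h _ ih =>
    have := ((fromRel_adj _ _ _).mp h).2
    rw [Walk.length_cons]
    omega

lemma natAbs_sub_le_length_boxProd {x y : ℤ × V} (w : (lineLattice □ G).Walk x y) :
    (y.1 - x.1).natAbs ≤ w.length := by
  classical
  obtain ⟨a, u⟩ := x
  obtain ⟨b, v⟩ := y
  rw [Walk.length_boxProd]
  exact (natAbs_sub_le_length_lineLattice _).trans (Nat.le_add_right _ _)

lemma ColumnConnected.reachable {i : ℤ} {ω : Config (lineLattice □ G)}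
    (hω : ω ∈ ColumnConnected G i) (u v : V) :
    (openSubgraph _ ω).Reachable (i, u) (i, v) :=
  reachable_openSubgraph_map (boxProdRight lineLattice G i).toHom (hω.preconnected u v)

lemma BlockConnected.reachable {m : ℕ} {ω : Config (lineLattice □ G)}
    (hω : ω ∈ BlockConnected G m) (u v : V) :
    (openSubgraph _ ω).Reachable (0, u) (m, v) := by
  induction m generalizing v with
  | zero => exact ColumnConnected.reachable hω u v
  | succ m ih =>
    obtain ⟨⟨hblock, w, hw⟩, hcol⟩ := hω
    have hcross : (openSubgraph _ ω).Adj (m, w) (m + 1, w) :=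
      (fromEdgeSet_adj _).mpr ⟨⟨(crossEdge G m w).2, hw⟩, by simp⟩
    push_cast
    exact ((ih hblock w).trans hcross.reachable).trans (ColumnConnected.reachable hcol w v)

lemma hasOpenPathOfLength_of_mem_blockConnected [Nonempty V] {n : ℕ}
    {ω : Config (lineLattice □ G)} (hω : ω ∈ BlockConnected G n) :
    HasOpenPathOfLength _ ω n := by
  classical
  obtain ⟨v⟩ := ‹Nonempty V›
  obtain ⟨w⟩ := BlockConnected.reachable hω v v
  have hlen : n ≤ w.bypass.length := by
    simpa using natAbs_sub_le_length_boxProd (w.bypass.mapLe (openSubgraph_le ω))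
  exact ⟨_, _, w.bypass.take n, w.bypass_isPath.take n, by simp [Walk.take_length, hlen]⟩

end Paths

-- `f / 2` is the double root of `x ^ 2 = f * x - f ^ 2 / 4`, so the ratio bound propagates.
lemma pos_of_two_step_recursion {f : ℝ} {b : ℕ → ℝ} (hf : 0 < f) (h₀ : f ≤ b 0)
    (h₁ : f * b 0 - f ^ 2 / 4 ≤ b 1) (h : ∀ m, f * b (m + 1) - f ^ 2 / 4 * b m ≤ b (m + 2))
    (m : ℕ) : 0 < b m := by
  have hstep : ∀ m, f / 2 * b m ≤ b (m + 1) := by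
    intro m
    induction m with
    | zero => nlinarith
    | succ m ih => nlinarith [h m]
  induction m with
  | zero => linarith
  | succ m ih => exact (mul_pos (half_pos hf) ih).trans_le (hstep m)

section BlockEvents

variable {G : SimpleGraph V} [Finite V]
  {μ : Measure (Config (lineLattice □ G))} [IsFiniteMeasure μ]

lemma measureReal_blockConnected_succ_ge (hμ : KIndepMeasure _ 1 μ) (m : ℕ) :
    μ.real (BlockConnected G m) * μ.real (ColumnConnected G (m + 1)) -
      μ.real (BlockConnected G m \ CrossOpen G m) ≤ μ.real (BlockConnected G (m + 1)) := by
  have hindep := hμ.measureReal_inter (slabEdges_subset_edgeSet G _ _)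
    (slabEdges_subset_edgeSet G _ _) (disjoint_endpointsOf_slabEdges G (lt_add_one (m : ℤ)))
    (measurableSet_blockConnected G m) (measurableSet_columnConnected G (m + 1))
  have hsplit := measureReal_inter_add_sdiff (μ := μ)
    (s := BlockConnected G m ∩ ColumnConnected G (m + 1))
    (cylinderSigma_le_pi _ _ (measurableSet_crossOpen G m))
  have hmono : μ.real ((BlockConnected G m ∩ ColumnConnected G (m + 1)) \ CrossOpen G m) ≤
      μ.real (BlockConnected G m \ CrossOpen G m) :=
    measureReal_mono fun ω hω => ⟨hω.1.1, hω.2⟩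
  rw [BlockConnected, Set.inter_right_comm]
  linarith

-- Forgetting column `m + 1` leaves an event independent of the cross edges leaving it.
lemma measureReal_blockConnected_sdiff_le (hμ : KIndepMeasure _ 1 μ) (m : ℕ) :
    μ.real (BlockConnected G (m + 1) \ CrossOpen G (m + 1 : ℕ)) ≤
      μ.real (BlockConnected G m) * μ.real (CrossOpen G (m + 1 : ℕ))ᶜ := by
  rw [← hμ.measureReal_inter (slabEdges_subset_edgeSet G _ _) (slabEdges_subset_edgeSet G _ _)
    (disjoint_endpointsOf_slabEdges G (by push_cast; omega : (m : ℤ) < (m + 1 : ℕ)))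
    (measurableSet_blockConnected G m) (measurableSet_crossOpen G _).compl]
  exact measureReal_mono fun ω hω => ⟨hω.1.1.1, hω.2⟩

theorem measureReal_blockConnected_pos (hμ : KIndepMeasure _ 1 μ) {f : ℝ} (hf : 0 < f)
    (hcol : ∀ i, f ≤ μ.real (ColumnConnected G i))
    (hcross : ∀ i, μ.real (CrossOpen G i)ᶜ ≤ f ^ 2 / 4) (m : ℕ) :
    0 < μ.real (BlockConnected G m) := by
  refine pos_of_two_step_recursion (b := fun m => μ.real (BlockConnected G m)) hf (hcol 0) ?_
    (fun m => ?_) m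
  · have hstep := measureReal_blockConnected_succ_ge hμ 0
    have hsdiff : μ.real (BlockConnected G 0 \ CrossOpen G 0) ≤ f ^ 2 / 4 :=
      (measureReal_mono fun _ hω => hω.2).trans (hcross 0)
    have hprod := mul_le_mul_of_nonneg_left (hcol 1)
      (measureReal_nonneg (μ := μ) (s := BlockConnected G 0))
    push_cast at hstep
    linarith
  · have hstep := measureReal_blockConnected_succ_ge hμ (m + 1)
    have hsdiff := measureReal_blockConnected_sdiff_le hμ m
    have h₁ := mul_le_mul_of_nonneg_left (hcol (m + 1 + 1)) (measureReal_nonneg (μ := μ)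
      (s := BlockConnected G (m + 1)))
    have h₂ := mul_le_mul_of_nonneg_left (hcross (m + 1 : ℕ)) (measureReal_nonneg (μ := μ)
      (s := BlockConnected G m))
    push_cast at hstep hsdiff h₁ h₂
    linarith

end BlockEvents

section EdgeProbability

variable {G : SimpleGraph V} {p : ℝ} {μ : Measure (Config (lineLattice □ G))}

lemma connFun_le_measureReal_columnConnected [Finite V] (hμ : μ ∈ MGe _ 1 p) (i : ℤ) :
    connFun G 1 p ≤ μ.real (ColumnConnected G i) := by
  have hmap := map_comp_mapEdgeSet_mem_MGe (boxProdRight lineLattice G i).toHom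
    (boxProdRight lineLattice G i).injective hμ
  exact (connFun_le hmap).trans_eq
    (map_measureReal_apply (measurable_comp_mapEdgeSet _) (Set.toFinite _).measurableSet)

lemma measureReal_crossOpen_compl_le [Fintype V] (hμ : μ ∈ MGe _ 1 p) (hp : p ≤ 1) (i : ℤ) :
    μ.real (CrossOpen G i)ᶜ ≤ (1 - p) ^ Fintype.card V := by
  have hdisj : Pairwise fun v w => ∀ x ∈ (crossEdge G i v : Sym2 (ℤ × V)),
      x ∉ (crossEdge G i w : Sym2 (ℤ × V)) := by
    intro v w hvw x hx
    rcases Sym2.mem_iff.mp hx with rfl | rfl <;> simp [crossEdge, hvw]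
  have hclosed := measure_forall_closed_le hμ (crossEdge G i) hdisj Finset.univ
  have hcompl :
      (CrossOpen G i)ᶜ = {ω | ∀ v ∈ Finset.univ, ω (crossEdge G i v) = false} := by
    ext
    simp [CrossOpen]
  have := hμ.1
  rw [Measure.real, hcompl, ← ENNReal.toReal_ofReal (by linarith : 0 ≤ 1 - p),
    ← ENNReal.toReal_pow]
  exact ENNReal.toReal_mono (by finiteness) hclosed

lemma connFun_pos_of_le_sq [Fintype V] (hconn : G.Connected) (hp : p ≤ 1)
    (h : 4 * (1 - p) ^ Fintype.card V ≤ connFun G 1 p ^ 2) : 0 < connFun G 1 p := by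
  rcases hp.lt_or_eq with hlt | rfl
  · have hpow : 0 < (1 - p) ^ Fintype.card V := pow_pos (by linarith) _
    have hnonneg : 0 ≤ connFun G 1 p :=
      Real.sInf_nonneg (by rintro _ ⟨μ, -, rfl⟩; exact ENNReal.toReal_nonneg)
    nlinarith
  · rw [connFun_one hconn]
    exact one_pos

end EdgeProbability

theorem longPathsCrit_boxProd_le {V : Type*} [Fintype V] (G : SimpleGraph V)
    (hconn : G.Connected) (p : ℝ) (hp : p ∈ Set.Icc (0:ℝ) 1)
    (h : 4 * (1 - p) ^ (Fintype.card V) ≤ connFun G 1 p ^ 2) :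
    longPathsCrit (lineLattice.boxProd G) ≤ p := by
  have hf := connFun_pos_of_le_sq hconn hp.2 h
  refine csInf_le ⟨0, fun _ hq => hq.1.1⟩ ⟨hp, fun μ hμ n => ?_⟩
  have := hμ.1
  have hcross (i : ℤ) : μ.real (CrossOpen G i)ᶜ ≤ connFun G 1 p ^ 2 / 4 := by
    linarith [measureReal_crossOpen_compl_le hμ hp.2 i]
  have hblock := measureReal_blockConnected_pos hμ.2.1 hf
    (connFun_le_measureReal_columnConnected hμ) hcross n
  have := hconn.nonempty
  exact (ENNReal.toReal_pos_iff.mp hblock).1.trans_le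
    (measure_mono fun _ => hasOpenPathOfLength_of_mem_blockConnected)

end OneIndep
end

section
/- For all p ∈ [0,1], the 1-independent connectivity function of the 4-cycle satisfies f_{1,C₄}(p) = 2p − 1 for p ∈ [1/2, 1], and f_{1,C₄}(p) = 0 for p ∈ [0, 1/2]. -/
open MeasureTheory ProbabilityTheory

namespace OneIndep

variable {V : Type*}

/-!
Closing one edge of a cycle leaves a Hamiltonian path, so a disconnected configuration of `C₄`
has at least two closed edges. Markov's inequality for the number of closed edges then gives
`P(disconnected) ≤ E[#closed] / 2 ≤ 2 (1 - p)` for every measure with edge probabilities at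
least `p`, independent or not. Conversely, a measure that closes no edge with probability
`2p - 1` and exactly two edges otherwise attains this bound while keeping opposite edges
(the only `1`-distant pairs of nonempty edge sets) independent; at `p = 1/2` it is never
connected, which gives the value `0` for all `p ≤ 1/2`.
-/

open SimpleGraph

section Measure

variable {Ω ι : Type*} [MeasurableSpace Ω] [Fintype ι]

lemma two_mul_measureReal_le_sum (μ : Measure Ω) [IsFiniteMeasure μ] {A : ι → Set Ω}
    (hA : ∀ i, MeasurableSet (A i)) {D : Set Ω}
    (hD : ∀ ω ∈ D, ∃ i j, i ≠ j ∧ ω ∈ A i ∧ ω ∈ A j) :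
    2 * μ.real D ≤ ∑ i, μ.real (A i) := by
  set N : Ω → ENNReal := fun ω => ∑ i, (A i).indicator 1 ω
  have hN : Measurable N := Finset.measurable_sum _ fun i _ => measurable_one.indicator (hA i)
  have hDN : D ⊆ {ω | 2 ≤ N ω} := by
    rintro ω hω
    obtain ⟨i, j, hij, hi, hj⟩ := hD ω hω
    classical
    calc (2 : ENNReal) = ∑ k ∈ {i, j}, (A k).indicator 1 ω := by
          simp [Finset.sum_pair hij, hi, hj, one_add_one_eq_two]
      _ ≤ N ω := Finset.sum_le_sum_of_subset (Finset.subset_univ _)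
  have key : 2 * μ D ≤ ∑ i, μ (A i) := calc
    2 * μ D ≤ 2 * μ {ω | 2 ≤ N ω} := by gcongr
    _ ≤ ∫⁻ ω, N ω ∂μ := mul_meas_ge_le_lintegral₀ hN.aemeasurable 2
    _ = ∑ i, μ (A i) := by
      rw [lintegral_finsetSum _ fun i _ => measurable_one.indicator (hA i)]
      simp only [lintegral_indicator_one (hA _)]
  have := ENNReal.toReal_mono (by simp [ENNReal.sum_eq_top, measure_ne_top]) key
  simpa [measureReal_def, ENNReal.toReal_sum, measure_ne_top] using this

open Classical in
lemma sum_ofReal_smul_dirac_apply [MeasurableSingletonClass Ω] {w : ι → ℝ} (hw : ∀ i, 0 ≤ w i)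
    (x : ι → Ω) (s : Set Ω) :
    (∑ i, ENNReal.ofReal (w i) • Measure.dirac (x i)) s =
      ENNReal.ofReal (∑ i, if x i ∈ s then w i else 0) := by
  rw [ENNReal.ofReal_sum_of_nonneg fun i _ => by split_ifs <;> simp [hw]]
  simp [Set.indicator_apply, apply_ite ENNReal.ofReal]

end Measure

section Graph

lemma not_connected_of_forall_adj_mem {H : SimpleGraph V} {S : Set V} {u v : V}
    (hu : u ∈ S) (hv : v ∉ S) (hS : ∀ a b, a ∈ S → H.Adj a b → b ∈ S) : ¬ H.Connected :=
  fun h => by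
    obtain ⟨d, -, hd, hd'⟩ := (h.preconnected u v).some.exists_boundary_dart S hu hv
    exact hd' (hS _ _ hd d.adj)

variable {n : ℕ}

open Fin.NatCast in
lemma connected_of_adj_add_one {H : SimpleGraph (Fin (n + 2))} (j : Fin (n + 2))
    (hH : ∀ i ≠ j, H.Adj i (i + 1)) : H.Connected := by
  have reach : ∀ k : ℕ, k < n + 2 → H.Reachable (j + 1) (j + 1 + (k : Fin (n + 2))) := by
    intro k hk
    induction k with
    | zero => simp
    | succ k ih =>
      have hne : j + 1 + (k : Fin (n + 2)) ≠ j := by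
        rw [add_assoc, Ne, add_eq_left, add_comm (1 : Fin (n + 2)), ← Nat.cast_succ,
          Fin.natCast_eq_zero]
        exact Nat.not_dvd_of_pos_of_lt k.succ_pos hk
      simpa [add_assoc] using (ih (by omega)).trans (hH _ hne).reachable
  have hall : ∀ v, H.Reachable (j + 1) v := fun v => by
    simpa using reach (v - (j + 1)).val (v - (j + 1)).isLt
  exact ⟨fun u v => (hall u).symm.trans (hall v)⟩

lemma cycleGraph_adj_add_one (i : Fin (n + 2)) : (cycleGraph (n + 2)).Adj i (i + 1) :=
  cycleGraph_adj.2 (Or.inr (add_sub_cancel_left i 1))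

lemma cycleGraph_four_edge_cases {a : Sym2 (Fin 4)} (ha : a ∈ (cycleGraph 4).edgeSet) :
    a = s(0, 1) ∨ a = s(1, 2) ∨ a = s(2, 3) ∨ a = s(3, 0) := by
  revert a
  decide

lemma cycleGraph_four_disjoint_cases {a b : Sym2 (Fin 4)} (ha : a ∈ (cycleGraph 4).edgeSet)
    (hb : b ∈ (cycleGraph 4).edgeSet) (hab : ∀ v ∈ a, v ∉ b) :
    a = s(0, 1) ∧ b = s(2, 3) ∨ a = s(2, 3) ∧ b = s(0, 1) ∨
      a = s(1, 2) ∧ b = s(3, 0) ∨ a = s(3, 0) ∧ b = s(1, 2) := by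
  revert a b
  decide

lemma cycleGraph_four_eq_of_disjoint {a b c : Sym2 (Fin 4)} (ha : a ∈ (cycleGraph 4).edgeSet)
    (hb : b ∈ (cycleGraph 4).edgeSet) (hc : c ∈ (cycleGraph 4).edgeSet)
    (hca : ∀ v ∈ c, v ∉ a) (hcb : ∀ v ∈ c, v ∉ b) : a = b := by
  revert a b c
  decide

end Graph

section Percolation

variable {G : SimpleGraph V}

lemma measurableSet_edge_eq (e : G.edgeSet) (b : Bool) :
    MeasurableSet {ω : Config G | ω e = b} :=
  show MeasurableSet ((fun ω : Config G => ω e) ⁻¹' {b}) from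
    measurable_pi_apply e (measurableSet_singleton b)

lemma cylinderSigma_empty : cylinderSigma G ∅ = ⊥ := by
  have hconst : (fun (ω : Config G) (x : {e : G.edgeSet // (e : Sym2 V) ∈ (∅ : Set (Sym2 V))}) =>
      ω x) = fun _ x => absurd x.2 (Set.notMem_empty _) :=
    funext fun _ => funext fun x => absurd x.2 (Set.notMem_empty _)
  rw [cylinderSigma, hconst, MeasurableSpace.comap_const]

lemma cylinderSigma_le_of_subset_singleton {F : Set (Sym2 V)} {e : Sym2 V} (he : e ∈ G.edgeSet)
    (hF : F ⊆ {e}) :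
    cylinderSigma G F ≤ MeasurableSpace.generateFrom {{ω | ω ⟨e, he⟩ = true}} := by
  refine Measurable.comap_le (@measurable_pi_lambda _ _ _ (.generateFrom _) _ _ fun x => ?_)
  obtain ⟨⟨e', he'⟩, hx⟩ := x
  obtain rfl : e' = e := hF hx
  exact @measurable_to_bool _ (.generateFrom _) _ (MeasurableSpace.measurableSet_generateFrom rfl)

lemma KDistant.notMem_of_mem {k : ℕ} {F₁ F₂ : Set (Sym2 V)} (h : KDistant G k F₁ F₂) (hk : 0 < k)
    {a b : Sym2 V} (ha : a ∈ F₁) (hb : b ∈ F₂) {v : V} (hv : v ∈ a) : v ∉ b := fun hv' =>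
  (h.2 v ⟨a, ha, hv⟩ v ⟨b, hb, hv'⟩ Walk.nil).not_gt hk

lemma openSubgraph_adj {ω : Config G} {u v : V} :
    (openSubgraph G ω).Adj u v ↔ ∃ h : G.Adj u v, ω ⟨s(u, v), h⟩ = true := by
  simp only [openSubgraph, fromEdgeSet_adj, Set.mem_ofPred_eq, mem_edgeSet]
  exact ⟨fun h => h.1, fun h => ⟨h, h.1.ne⟩⟩

lemma measureReal_closed_le {k : ℕ} {p : ℝ} {μ : Measure (Config G)} (hμ : μ ∈ MGe G k p)
    (e : G.edgeSet) : μ.real {ω | ω e = false} ≤ 1 - p := by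
  have := hμ.1
  have hcompl : {ω : Config G | ω e = false} = {ω | ω e = true}ᶜ := by ext; simp
  rw [hcompl, probReal_compl_eq_one_sub (measurableSet_edge_eq e true), sub_le_sub_iff_left]
  exact (ENNReal.ofReal_le_iff_le_toReal (measure_ne_top _ _)).1 (hμ.2.2 e)

lemma connFun_eq_of_forall_le {k : ℕ} {p x : ℝ}
    (hx : ∃ μ ∈ MGe G k p, (μ {ω | (openSubgraph G ω).Connected}).toReal = x)
    (hle : ∀ μ ∈ MGe G k p, x ≤ (μ {ω | (openSubgraph G ω).Connected}).toReal) :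
    connFun G k p = x := by
  obtain ⟨μ, hμ, rfl⟩ := hx
  exact IsLeast.csInf_eq ⟨⟨μ, hμ, rfl⟩, by rintro _ ⟨ν, hν, rfl⟩; exact hle ν hν⟩

def closedConfig [DecidableEq V] (C : Finset (Sym2 V)) : Config G :=
  fun e => decide ((e : Sym2 V) ∉ C)

end Percolation

section Cycle

variable {n : ℕ}

def cycleEdge (i : Fin (n + 2)) : (cycleGraph (n + 2)).edgeSet :=
  ⟨s(i, i + 1), cycleGraph_adj_add_one i⟩

lemma exists_ne_closed_of_not_connected {ω : Config (cycleGraph (n + 2))}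
    (h : ¬ (openSubgraph _ ω).Connected) :
    ∃ i j, i ≠ j ∧ ω (cycleEdge i) = false ∧ ω (cycleEdge j) = false := by
  by_contra! hω
  obtain ⟨j, hj⟩ : ∃ j, ∀ i ≠ j, ω (cycleEdge i) = true := by
    by_cases hc : ∀ j, ω (cycleEdge j) = true
    · exact ⟨0, fun i _ => hc i⟩
    · obtain ⟨j, hj⟩ := not_forall.1 hc
      exact ⟨j, fun i hij => by simpa using hω j i hij.symm (by simpa using hj)⟩
  exact h (connected_of_adj_add_one j fun i hi => openSubgraph_adj.2 ⟨_, hj i hi⟩)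

lemma one_sub_le_measureReal_connected_cycleGraph {k : ℕ} {p : ℝ}
    {μ : Measure (Config (cycleGraph (n + 2)))} (hμ : μ ∈ MGe (cycleGraph (n + 2)) k p) :
    1 - (n + 2) * (1 - p) / 2 ≤ μ.real {ω | (openSubgraph _ ω).Connected} := by
  have := hμ.1
  have hmarkov := two_mul_measureReal_le_sum μ (fun i => measurableSet_edge_eq (cycleEdge i) false)
    (D := {ω | (openSubgraph _ ω).Connected}ᶜ) fun ω hω => exists_ne_closed_of_not_connected hω
  have hsum : ∑ i, μ.real {ω | ω (cycleEdge i) = false} ≤ (n + 2) * (1 - p) :=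
    (Finset.sum_le_sum fun i _ => measureReal_closed_le hμ (cycleEdge i)).trans_eq
      (by simp [mul_sub])
  rw [probReal_compl_eq_one_sub (Set.toFinite _).measurableSet] at hmarkov
  linarith

end Cycle

section CycleFour

lemma kIndepMeasure_cycleGraph_four {μ : Measure (Config (cycleGraph 4))} [IsProbabilityMeasure μ]
    (h : ∀ a b : (cycleGraph 4).edgeSet, (∀ v ∈ (a : Sym2 (Fin 4)), v ∉ (b : Sym2 (Fin 4))) →
      μ ({ω | ω a = true} ∩ {ω | ω b = true}) = μ {ω | ω a = true} * μ {ω | ω b = true}) :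
    KIndepMeasure (cycleGraph 4) 1 μ := by
  intro F₁ F₂ h₁ h₂ hd
  rcases F₁.eq_empty_or_nonempty with rfl | ⟨a, ha⟩
  · rw [cylinderSigma_empty]
    exact indep_bot_left _
  rcases F₂.eq_empty_or_nonempty with rfl | ⟨b, hb⟩
  · rw [cylinderSigma_empty]
    exact indep_bot_right _
  have hF₁ : F₁ ⊆ {a} := fun a' ha' => cycleGraph_four_eq_of_disjoint (h₁ ha') (h₁ ha) (h₂ hb)
    (fun _ hv hv' => hd.notMem_of_mem one_pos ha' hb hv' hv)
    (fun _ hv hv' => hd.notMem_of_mem one_pos ha hb hv' hv)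
  have hF₂ : F₂ ⊆ {b} := fun b' hb' => cycleGraph_four_eq_of_disjoint (h₂ hb') (h₂ hb) (h₁ ha)
    (fun _ => hd.notMem_of_mem one_pos ha hb') (fun _ => hd.notMem_of_mem one_pos ha hb)
  have hab : IndepSet {ω | ω ⟨a, h₁ ha⟩ = true} {ω | ω ⟨b, h₂ hb⟩ = true} μ :=
    (indepSet_iff_measure_inter_eq_mul (measurableSet_edge_eq _ _) (measurableSet_edge_eq _ _) μ).2
      (h _ _ fun _ => hd.notMem_of_mem one_pos ha hb)
  exact indep_of_indep_of_le_right (indep_of_indep_of_le_left hab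
    (cylinderSigma_le_of_subset_singleton _ hF₁)) (cylinderSigma_le_of_subset_singleton _ hF₂)

def extremalClosedSets : Fin 5 → Finset (Sym2 (Fin 4)) :=
  ![∅, {s(1, 2), s(3, 0)}, {s(0, 1), s(2, 3)}, {s(0, 1), s(1, 2)}, {s(2, 3), s(3, 0)}]

def extremalWeights (r : ℝ) : Fin 5 → ℝ :=
  ![2 * r - 1, (1 - r) ^ 2, (1 - r) ^ 2, r * (1 - r), r * (1 - r)]

/-- Every atom but the first closes exactly two edges, so only the first one is connected. The
weights make each edge open with probability `r` and both edges of an opposite pair open with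
probability `(2r - 1) + (1 - r) ^ 2 = r ^ 2`. -/
noncomputable def extremalMeasure (r : ℝ) : Measure (Config (cycleGraph 4)) :=
  ∑ i, ENNReal.ofReal (extremalWeights r i) • Measure.dirac (closedConfig (extremalClosedSets i))

lemma connected_closedConfig_extremalClosedSets_iff (i : Fin 5) :
    (openSubgraph (cycleGraph 4) (closedConfig (extremalClosedSets i))).Connected ↔ i = 0 := by
  fin_cases i
  · exact iff_of_true (connected_of_adj_add_one 0 fun i _ =>
      openSubgraph_adj.2 ⟨cycleGraph_adj_add_one i, by simp [closedConfig, extremalClosedSets]⟩) rfl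
  all_goals refine iff_of_false ?_ (by decide)
  · exact not_connected_of_forall_adj_mem (S := {0, 1}) (u := 0) (v := 2) (by simp) (by simp)
      (by simp only [openSubgraph_adj, closedConfig, extremalClosedSets]; decide)
  · exact not_connected_of_forall_adj_mem (S := {1, 2}) (u := 1) (v := 0) (by simp) (by simp)
      (by simp only [openSubgraph_adj, closedConfig, extremalClosedSets]; decide)
  · exact not_connected_of_forall_adj_mem (S := {1}) (u := 1) (v := 0) (by simp) (by simp)
      (by simp only [openSubgraph_adj, closedConfig, extremalClosedSets]; decide)
  · exact not_connected_of_forall_adj_mem (S := {3}) (u := 3) (v := 0) (by simp) (by simp)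
      (by simp only [openSubgraph_adj, closedConfig, extremalClosedSets]; decide)

variable {r : ℝ}

lemma extremalWeights_nonneg (hr : r ∈ Set.Icc (1 / 2 : ℝ) 1) (i : Fin 5) :
    0 ≤ extremalWeights r i := by
  obtain ⟨h₁, h₂⟩ := hr
  fin_cases i <;> simp [extremalWeights] <;> nlinarith

open Classical in
lemma extremalMeasure_apply (hr : r ∈ Set.Icc (1 / 2 : ℝ) 1) (s : Set (Config (cycleGraph 4))) :
    extremalMeasure r s = ENNReal.ofReal
      (∑ i, if closedConfig (extremalClosedSets i) ∈ s then extremalWeights r i else 0) :=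
  sum_ofReal_smul_dirac_apply (extremalWeights_nonneg hr) _ s

lemma isProbabilityMeasure_extremalMeasure (hr : r ∈ Set.Icc (1 / 2 : ℝ) 1) :
    IsProbabilityMeasure (extremalMeasure r) := by
  constructor
  simp only [extremalMeasure_apply hr, Set.mem_univ, ↓reduceIte, Fin.sum_univ_five, extremalWeights,
    Matrix.cons_val_zero, Matrix.cons_val_one, Matrix.cons_val, ENNReal.ofReal_eq_one]
  ring

lemma extremalMeasure_edge (hr : r ∈ Set.Icc (1 / 2 : ℝ) 1) (e : (cycleGraph 4).edgeSet) :
    extremalMeasure r {ω | ω e = true} = ENNReal.ofReal r := by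
  obtain ⟨a, ha⟩ := e
  rw [extremalMeasure_apply hr]
  rcases cycleGraph_four_edge_cases ha with rfl | rfl | rfl | rfl <;>
  · simp [Fin.sum_univ_five, closedConfig, extremalClosedSets, extremalWeights]
    ring_nf

lemma extremalMeasure_inter_edge (hr : r ∈ Set.Icc (1 / 2 : ℝ) 1) {a b : (cycleGraph 4).edgeSet}
    (hab : ∀ v ∈ (a : Sym2 (Fin 4)), v ∉ (b : Sym2 (Fin 4))) :
    extremalMeasure r ({ω | ω a = true} ∩ {ω | ω b = true}) = ENNReal.ofReal (r ^ 2) := by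
  obtain ⟨a, ha⟩ := a
  obtain ⟨b, hb⟩ := b
  rw [extremalMeasure_apply hr]
  rcases cycleGraph_four_disjoint_cases ha hb hab with
    ⟨rfl, rfl⟩ | ⟨rfl, rfl⟩ | ⟨rfl, rfl⟩ | ⟨rfl, rfl⟩ <;>
  · simp [Fin.sum_univ_five, closedConfig, extremalClosedSets, extremalWeights]
    ring_nf

lemma extremalMeasure_connected (hr : r ∈ Set.Icc (1 / 2 : ℝ) 1) :
    extremalMeasure r {ω | (openSubgraph _ ω).Connected} = ENNReal.ofReal (2 * r - 1) := by
  simp [extremalMeasure_apply hr, connected_closedConfig_extremalClosedSets_iff, extremalWeights]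

lemma extremalMeasure_mem_MGe {p : ℝ} (hr : r ∈ Set.Icc (1 / 2 : ℝ) 1) (hpr : p ≤ r) :
    extremalMeasure r ∈ MGe (cycleGraph 4) 1 p := by
  have := isProbabilityMeasure_extremalMeasure hr
  refine ⟨this, kIndepMeasure_cycleGraph_four fun a b hab => ?_, fun e => ?_⟩
  · rw [extremalMeasure_inter_edge hr hab, extremalMeasure_edge hr, extremalMeasure_edge hr,
      ← ENNReal.ofReal_mul (by linarith [hr.1]), sq]
  · rw [extremalMeasure_edge hr]
    exact ENNReal.ofReal_le_ofReal hpr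

end CycleFour

theorem connFun_cycleGraph_four (p : ℝ) (hp : p ∈ Set.Icc (0:ℝ) 1) :
    (1 / 2 ≤ p → connFun (SimpleGraph.cycleGraph 4) 1 p = 2 * p - 1) ∧
    (p ≤ 1 / 2 → connFun (SimpleGraph.cycleGraph 4) 1 p = 0) := by
  constructor
  · intro hp₂
    refine connFun_eq_of_forall_le ⟨extremalMeasure p, extremalMeasure_mem_MGe ⟨hp₂, hp.2⟩ le_rfl,
      ?_⟩ fun μ hμ => ?_
    · rw [extremalMeasure_connected ⟨hp₂, hp.2⟩, ENNReal.toReal_ofReal (by linarith)]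
    · have := one_sub_le_measureReal_connected_cycleGraph (n := 2) hμ
      rw [measureReal_def] at this
      linarith
  · intro hp₂
    refine connFun_eq_of_forall_le ⟨extremalMeasure (1 / 2),
      extremalMeasure_mem_MGe (by norm_num) hp₂, ?_⟩ fun _ _ => ENNReal.toReal_nonneg
    rw [extremalMeasure_connected (by norm_num)]
    norm_num

end OneIndep
end
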